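/- arXiv:2406.17160 — 6 statements merged into one kernel-verified Lean document; each statement's English description precedes it below -/
import Mathlib

section
/- Every local minimum is a global minimum of the worst-case deceptive policy synthesis problem in its abstract convex form: if x ∈ F and there exists a neighborhood U of x (in the product norm topology) such that Φ(x) ≤ Φ(y) for all y ∈ F ∩ U, then Φ(x) ≤ Φ(y) for all y ∈ F. -/
open Finset

/-- Auxiliary: a product of slightly shifted `[0,1]`-factors is close to the
original product. -/
private lemma prod_shift_le {ι : Type*} (S : Finset ι) (a b : ι → ℝ)
    (ha0 : ∀ i ∈ S, 0 ≤ a i) (ha1 : ∀ i ∈ S, a i ≤ 1)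
    (hb0 : ∀ i ∈ S, 0 ≤ b i) (hb1 : ∀ i ∈ S, b i ≤ 1)
    (s : ℝ) (hs0 : 0 ≤ s) (hs1 : s ≤ 1) :
    ∏ i ∈ S, (a i + s * (b i - a i)) ≤ (∏ i ∈ S, a i) + s * 3 ^ S.card := by
  classical
  induction S using Finset.cons_induction with
  | empty => simp; nlinarith
  | cons j S hj ih =>
    have ha0' : ∀ i ∈ S, 0 ≤ a i := fun i hi => ha0 i (Finset.mem_cons_of_mem hi)
    have ha1' : ∀ i ∈ S, a i ≤ 1 := fun i hi => ha1 i (Finset.mem_cons_of_mem hi)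
    have hb0' : ∀ i ∈ S, 0 ≤ b i := fun i hi => hb0 i (Finset.mem_cons_of_mem hi)
    have hb1' : ∀ i ∈ S, b i ≤ 1 := fun i hi => hb1 i (Finset.mem_cons_of_mem hi)
    have ihS := ih ha0' ha1' hb0' hb1'
    have haj0 : 0 ≤ a j := ha0 j (Finset.mem_cons_self _ _)
    have haj1 : a j ≤ 1 := ha1 j (Finset.mem_cons_self _ _)
    have hbj0 : 0 ≤ b j := hb0 j (Finset.mem_cons_self _ _)
    have hbj1 : b j ≤ 1 := hb1 j (Finset.mem_cons_self _ _)
    have hfac0 : ∀ i ∈ S, 0 ≤ a i + s * (b i - a i) := by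
      intro i hi
      have := ha0' i hi; have := hb0' i hi; have := ha1' i hi
      nlinarith
    have hP0 : 0 ≤ ∏ i ∈ S, (a i + s * (b i - a i)) := Finset.prod_nonneg hfac0
    have hA0 : 0 ≤ ∏ i ∈ S, a i := Finset.prod_nonneg ha0'
    have hA1 : ∏ i ∈ S, a i ≤ 1 := Finset.prod_le_one ha0' ha1'
    have h3k : (1:ℝ) ≤ 3 ^ S.card := one_le_pow₀ (by norm_num)
    rw [Finset.prod_cons, Finset.prod_cons, Finset.card_cons]
    have hK0 : (0:ℝ) ≤ 3 ^ S.card := by positivity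
    have hstep : (a j + s * (b j - a j)) * ∏ i ∈ S, (a i + s * (b i - a i)) ≤
        (a j + s) * ((∏ i ∈ S, a i) + s * 3 ^ S.card) := by
      apply mul_le_mul _ ihS hP0 (by linarith)
      nlinarith
    refine hstep.trans ?_
    have : (3:ℝ) ^ (S.card + 1) = 3 * 3 ^ S.card := by ring
    rw [this]
    nlinarith [mul_nonneg hs0 (sub_nonneg.2 hA1),
      mul_nonneg (mul_nonneg (sub_nonneg.2 haj1) hs0) hK0,
      mul_nonneg (mul_nonneg hs0 (sub_nonneg.2 hs1)) hK0,
      mul_nonneg hs0 (sub_nonneg.2 h3k)]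

/-- Auxiliary: given two `[0,1]`-valued vectors whose products of entries are
both at most `c > 0`, one can move an arbitrarily small strictly positive step
from the first vector toward the second while keeping the product at most `c`. -/
private lemma exists_small_step {n : ℕ} (a b : Fin n → ℝ) (c δ : ℝ)
    (ha0 : ∀ i, 0 ≤ a i) (ha1 : ∀ i, a i ≤ 1)
    (hb0 : ∀ i, 0 ≤ b i) (hb1 : ∀ i, b i ≤ 1)
    (hpa : ∏ i, a i ≤ c) (hpb : ∏ i, b i ≤ c) (hc : 0 < c)
    (hδ0 : 0 < δ) (hδ1 : δ ≤ 1) :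
    ∃ τ : Fin n → ℝ, (∀ i, 0 < τ i) ∧ (∀ i, τ i ≤ δ) ∧
      ∏ i, (a i + τ i * (b i - a i)) ≤ c := by
  classical
  have h3n : (0:ℝ) < 3 ^ n := by positivity
  rcases lt_or_eq_of_le hpa with hlt | heq
  · -- strictly feasible: a uniform tiny step works
    set s : ℝ := min δ ((c - ∏ i, a i) / 3 ^ n) with hs
    have hs0 : 0 < s := lt_min hδ0 (div_pos (by linarith) (by positivity))
    have hsδ : s ≤ δ := min_le_left _ _
    refine ⟨fun _ => s, fun _ => hs0, fun _ => hsδ, ?_⟩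
    have key := prod_shift_le Finset.univ a b (fun i _ => ha0 i) (fun i _ => ha1 i)
      (fun i _ => hb0 i) (fun i _ => hb1 i) s hs0.le (hsδ.trans hδ1)
    have hcard : (Finset.univ : Finset (Fin n)).card = n := by simp
    rw [hcard] at key
    have : s * 3 ^ n ≤ c - ∏ i, a i := by
      have := min_le_right δ ((c - ∏ i, a i) / 3 ^ n)
      calc s * 3 ^ n ≤ ((c - ∏ i, a i) / 3 ^ n) * 3 ^ n :=
            mul_le_mul_of_nonneg_right this (by positivity)
        _ = c - ∏ i, a i := by field_simp
    linarith
  · -- product is exactly c: all a i are positive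
    have hapos : ∀ i, 0 < a i := by
      intro i
      rcases lt_or_eq_of_le (ha0 i) with h | h
      · exact h
      · exfalso
        have : (∏ i, a i) = 0 := Finset.prod_eq_zero (Finset.mem_univ i) h.symm
        rw [this] at heq; linarith
    by_cases hex : ∃ j, b j < a j
    · obtain ⟨j, hj⟩ := hex
      set P : ℝ := ∏ i ∈ Finset.univ.erase j, a i with hPdef
      have hP0 : 0 < P := Finset.prod_pos (fun i _ => hapos i)
      have hPa : a j * P = c := by
        rw [hPdef, Finset.mul_prod_erase _ _ (Finset.mem_univ j)]; exact heq
      set e : ℝ := a j - b j with he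
      have he0 : 0 < e := by simp [he]; linarith
      set s : ℝ := min δ (δ * e * P / 3 ^ n) with hs
      have hs0 : 0 < s := lt_min hδ0 (by positivity)
      have hsδ : s ≤ δ := min_le_left _ _
      refine ⟨fun i => if i = j then δ else s, ?_, ?_, ?_⟩
      · intro i; dsimp only; split <;> [exact hδ0; exact hs0]
      · intro i; dsimp only; split <;> [exact le_rfl; exact hsδ]
      · have hsplit : ∏ i, (a i + (if i = j then δ else s) * (b i - a i)) =
            (a j + δ * (b j - a j)) *
              ∏ i ∈ Finset.univ.erase j, (a i + s * (b i - a i)) := by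
          rw [← Finset.mul_prod_erase _ _ (Finset.mem_univ j)]
          simp only [if_pos rfl]
          congr 1
          refine Finset.prod_congr rfl (fun i hi => ?_)
          rw [if_neg (Finset.ne_of_mem_erase hi)]
        rw [hsplit]
        have key := prod_shift_le (Finset.univ.erase j) a b
          (fun i _ => ha0 i) (fun i _ => ha1 i) (fun i _ => hb0 i) (fun i _ => hb1 i)
          s hs0.le (hsδ.trans hδ1)
        have hcard : (Finset.univ.erase j).card ≤ n := by
          calc (Finset.univ.erase j).card ≤ (Finset.univ : Finset (Fin n)).card :=
                Finset.card_le_card (Finset.erase_subset _ _)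
            _ = n := by simp
        have h3le : (3:ℝ) ^ (Finset.univ.erase j).card ≤ 3 ^ n :=
          pow_le_pow_right₀ (by norm_num) hcard
        have key2 : ∏ i ∈ Finset.univ.erase j, (a i + s * (b i - a i)) ≤ P + s * 3 ^ n := by
          refine key.trans ?_
          have : s * 3 ^ (Finset.univ.erase j).card ≤ s * 3 ^ n :=
            mul_le_mul_of_nonneg_left h3le hs0.le
          linarith
        have hfacj : a j + δ * (b j - a j) = a j - δ * e := by simp [he]; ring
        have hfacj0 : 0 ≤ a j - δ * e := by nlinarith [hb0 j]
        have hs3 : s * 3 ^ n ≤ δ * e * P := by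
          have := min_le_right δ (δ * e * P / 3 ^ n)
          calc s * 3 ^ n ≤ (δ * e * P / 3 ^ n) * 3 ^ n :=
                mul_le_mul_of_nonneg_right this (by positivity)
            _ = δ * e * P := by field_simp
        have hprod0 : 0 ≤ ∏ i ∈ Finset.univ.erase j, (a i + s * (b i - a i)) := by
          apply Finset.prod_nonneg
          intro i _
          nlinarith [ha0 i, hb0 i, ha1 i, hs0.le, hsδ.trans hδ1]
        calc (a j + δ * (b j - a j)) * ∏ i ∈ Finset.univ.erase j, (a i + s * (b i - a i))
            = (a j - δ * e) * ∏ i ∈ Finset.univ.erase j, (a i + s * (b i - a i)) := by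
              rw [hfacj]
          _ ≤ (a j - δ * e) * (P + s * 3 ^ n) := mul_le_mul_of_nonneg_left key2 hfacj0
          _ ≤ c := by
              have t1 : a j * (s * 3 ^ n) ≤ s * 3 ^ n := by
                nlinarith [mul_nonneg (sub_nonneg.2 (ha1 j)) (mul_nonneg hs0.le h3n.le)]
              have t3 : 0 ≤ δ * e * (s * 3 ^ n) :=
                mul_nonneg (mul_nonneg hδ0.le he0.le) (mul_nonneg hs0.le h3n.le)
              nlinarith [hs3, t1, t3, hPa]
    · -- no coordinate decreases: then b = a
      push_neg at hex
      have hba : ∀ i, b i = a i := by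
        intro i
        refine le_antisymm ?_ (hex i)
        by_contra h
        push_neg at h
        have hPerase : 0 < ∏ k ∈ Finset.univ.erase i, a k :=
          Finset.prod_pos (fun k _ => hapos k)
        have h1 : ∏ k ∈ Finset.univ.erase i, a k ≤ ∏ k ∈ Finset.univ.erase i, b k :=
          Finset.prod_le_prod (fun k _ => ha0 k) (fun k _ => hex k)
        have h2 : (∏ k, a k) < ∏ k, b k := by
          rw [← Finset.mul_prod_erase _ a (Finset.mem_univ i),
            ← Finset.mul_prod_erase _ b (Finset.mem_univ i)]
          have : a i * ∏ k ∈ Finset.univ.erase i, a k <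
              b i * ∏ k ∈ Finset.univ.erase i, a k :=
            mul_lt_mul_of_pos_right h hPerase
          refine this.trans_le (mul_le_mul_of_nonneg_left h1 (hb0 i))
        rw [heq] at h2; linarith
      refine ⟨fun _ => δ, fun _ => hδ0, fun _ => le_rfl, ?_⟩
      have : ∀ i, a i + δ * (b i - a i) = a i := by intro i; rw [hba i]; ring
      calc ∏ i, (a i + δ * (b i - a i)) = ∏ i, a i := Finset.prod_congr rfl (fun i _ => this i)
        _ ≤ c := hpa

/-- Every local minimum is a global minimum of the worst-case deceptive policy
synthesis problem in its abstract convex form. -/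
theorem worst_case_local_min_is_global_min
    {n : ℕ} (hn : 0 < n)
    (E : Fin n → Type*) [∀ i, NormedAddCommGroup (E i)] [∀ i, NormedSpace ℝ (E i)]
    (D : ∀ i, Set (E i)) (hD : ∀ i, Convex ℝ (D i))
    (f : ∀ i, E i → ℝ) (hf : ∀ i, ConvexOn ℝ (D i) (f i))
    (g : ∀ i, E i →ᵃ[ℝ] ℝ) (hg : ∀ i, ∀ z ∈ D i, 0 ≤ g i z ∧ g i z ≤ 1)
    (ν : ℝ) (hν : ν < 1)
    (F : Set (∀ i, E i))
    (hF : F = {x : ∀ i, E i | (∀ i, x i ∈ D i) ∧ ∏ i, (1 - g i (x i)) ≤ 1 - ν})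
    (Φ : (∀ i, E i) → ℝ)
    (hΦ : ∀ x, Φ x = Finset.univ.sup' ⟨⟨0, hn⟩, Finset.mem_univ _⟩ (fun i => f i (x i)))
    (x : ∀ i, E i) (hx : x ∈ F)
    (hloc : ∃ U ∈ nhds x, ∀ y ∈ F ∩ U, Φ x ≤ Φ y) :
    ∀ y ∈ F, Φ x ≤ Φ y := by
  classical
  intro y hy
  by_contra hlt
  push_neg at hlt
  obtain ⟨U, hU, hmin⟩ := hloc
  obtain ⟨ε, hε, hball⟩ := Metric.mem_nhds_iff.mp hU
  have hxF := hx
  rw [hF] at hxF hy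
  obtain ⟨hxD, hxP⟩ := hxF
  obtain ⟨hyD, hyP⟩ := hy
  have hc : (0:ℝ) < 1 - ν := by linarith
  set a : Fin n → ℝ := fun i => 1 - g i (x i) with ha
  set b : Fin n → ℝ := fun i => 1 - g i (y i) with hb
  have ha0 : ∀ i, 0 ≤ a i := fun i => by have := (hg i (x i) (hxD i)).2; simp [ha]; linarith
  have ha1 : ∀ i, a i ≤ 1 := fun i => by have := (hg i (x i) (hxD i)).1; simp [ha]; linarith
  have hb0 : ∀ i, 0 ≤ b i := fun i => by have := (hg i (y i) (hyD i)).2; simp [hb]; linarith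
  have hb1 : ∀ i, b i ≤ 1 := fun i => by have := (hg i (y i) (hyD i)).1; simp [hb]; linarith
  have hne : (Finset.univ : Finset (Fin n)).Nonempty := ⟨⟨0, hn⟩, Finset.mem_univ _⟩
  set B : ℝ := Finset.univ.sup' hne (fun i => ‖y i - x i‖) with hBdef
  have hB0 : 0 ≤ B := le_trans (norm_nonneg _) (Finset.le_sup' (fun i => ‖y i - x i‖) (Finset.mem_univ (⟨0, hn⟩ : Fin n)))
  set δ : ℝ := min 1 (ε / (B + 1)) with hδdef
  have hδ0 : 0 < δ := lt_min one_pos (by positivity)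
  have hδ1 : δ ≤ 1 := min_le_left _ _
  obtain ⟨τ, hτ0, hτδ, hτprod⟩ := exists_small_step a b (1 - ν) δ ha0 ha1 hb0 hb1 hxP hyP hc hδ0 hδ1
  have hτ1 : ∀ i, τ i ≤ 1 := fun i => (hτδ i).trans hδ1
  set z : ∀ i, E i := fun i => (1 - τ i) • x i + τ i • y i with hz
  -- z is feasible
  have hzD : ∀ i, z i ∈ D i := fun i =>
    hD i (hxD i) (hyD i) (by linarith [hτ1 i]) (hτ0 i).le (by ring)
  have hgz : ∀ i, g i (z i) = (1 - τ i) * g i (x i) + τ i * g i (y i) := by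
    intro i
    have h1 : z i = AffineMap.lineMap (x i) (y i) (τ i) := by
      rw [AffineMap.lineMap_apply_module]
    rw [h1, AffineMap.apply_lineMap, AffineMap.lineMap_apply_module, smul_eq_mul, smul_eq_mul]
  have hzP : ∏ i, (1 - g i (z i)) ≤ 1 - ν := by
    have : ∀ i, 1 - g i (z i) = a i + τ i * (b i - a i) := by
      intro i; rw [hgz i]; simp [ha, hb]; ring
    calc ∏ i, (1 - g i (z i)) = ∏ i, (a i + τ i * (b i - a i)) :=
          Finset.prod_congr rfl (fun i _ => this i)
      _ ≤ 1 - ν := hτprod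
  have hzF : z ∈ F := by rw [hF]; exact ⟨hzD, hzP⟩
  -- z is close to x
  have hzU : z ∈ U := by
    apply hball
    rw [Metric.mem_ball, dist_pi_lt_iff hε]
    intro i
    have hzi : z i - x i = τ i • (y i - x i) := by
      simp only [hz]
      rw [sub_smul, one_smul, smul_sub]
      abel
    rw [dist_eq_norm, hzi, norm_smul, Real.norm_eq_abs, abs_of_pos (hτ0 i)]
    have h1 : ‖y i - x i‖ ≤ B := Finset.le_sup' (fun i => ‖y i - x i‖) (Finset.mem_univ i)
    have h2 : τ i * ‖y i - x i‖ ≤ δ * B :=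
      mul_le_mul (hτδ i) h1 (norm_nonneg _) hδ0.le
    have h3 : δ * B < ε := by
      have h4 : δ ≤ ε / (B + 1) := min_le_right _ _
      have h5 : δ * B ≤ (ε / (B + 1)) * B := mul_le_mul_of_nonneg_right h4 hB0
      have h6 : (ε / (B + 1)) * B < ε := by
        rw [div_mul_eq_mul_div, div_lt_iff₀ (by linarith)]
        nlinarith
      linarith
    linarith
  -- Φ z < Φ x
  have hfz : ∀ i, f i (z i) < Φ x := by
    intro i
    have hconv := (hf i).2 (hxD i) (hyD i) (by linarith [hτ1 i] : (0:ℝ) ≤ 1 - τ i)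
      (hτ0 i).le (by ring : (1 - τ i) + τ i = 1)
    rw [smul_eq_mul, smul_eq_mul] at hconv
    have hfx : f i (x i) ≤ Φ x := by
      rw [hΦ x]; exact Finset.le_sup' (fun i => f i (x i)) (Finset.mem_univ i)
    have hfy : f i (y i) ≤ Φ y := by
      rw [hΦ y]; exact Finset.le_sup' (fun i => f i (y i)) (Finset.mem_univ i)
    have : (1 - τ i) * f i (x i) + τ i * f i (y i) < Φ x := by
      nlinarith [hτ0 i, hτ1 i]
    exact lt_of_le_of_lt hconv this
  have hΦz : Φ z < Φ x := by
    rw [hΦ z]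
    exact (Finset.sup'_lt_iff _).mpr (fun i _ => hfz i)
  have := hmin z (Set.mem_inter hzF hzU)
  linarith
end

section
/- If x ∈ F satisfies the product constraint strictly, i.e. Π i (1 − g i (x i)) < 1 − ν, and there exists y ∈ F with Φ(y) < Φ(x), then x is not a local minimum of Φ on F: for every δ > 0 there exists z ∈ F with ‖z − x‖ < δ and Φ(z) < Φ(x). -/
/-! Along the segment from `x` to a feasible `y` with `Φ y < Φ x`, the objective, a maximum of
convex functions, is strictly below `Φ x` at every `t ∈ (0, 1]`, while the product constraint,
continuous in `t`, stays strict for small `t`. -/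

open Set Filter Topology AffineMap

theorem ConvexOn.finset_sup' {𝕜 E β ι : Type*} [Semiring 𝕜] [PartialOrder 𝕜] [AddCommMonoid E]
    [SMul 𝕜 E] [AddCommMonoid β] [LinearOrder β] [IsOrderedAddMonoid β] [Module 𝕜 β]
    [PosSMulMono 𝕜 β] {s : Set E} {t : Finset ι} (ht : t.Nonempty) {f : ι → E → β}
    (hf : ∀ i ∈ t, ConvexOn 𝕜 s (f i)) : ConvexOn 𝕜 s fun x ↦ t.sup' ht fun i ↦ f i x := by
  obtain ⟨i₀, hi₀⟩ := ht
  refine ⟨(hf i₀ hi₀).1, fun x hx y hy a b ha hb hab ↦ Finset.sup'_le _ _ fun i hi ↦ ?_⟩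
  calc f i (a • x + b • y) ≤ a • f i x + b • f i y := (hf i hi).2 hx hy ha hb hab
    _ ≤ _ := by gcongr <;> exact Finset.le_sup' (fun j ↦ f j _) hi

theorem ConvexOn.map_lineMap_lt_left {𝕜 E β : Type*} [Ring 𝕜] [PartialOrder 𝕜]
    [IsOrderedRing 𝕜] [AddCommGroup E] [Module 𝕜 E] [AddCommGroup β] [PartialOrder β]
    [IsOrderedAddMonoid β] [Module 𝕜 β] [PosSMulStrictMono 𝕜 β] {s : Set E} {f : E → β}
    (hf : ConvexOn 𝕜 s f) {x y : E} (hx : x ∈ s) (hy : y ∈ s) (hfxy : f y < f x) {t : 𝕜}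
    (ht : t ∈ Ioc 0 1) : f (lineMap x y t) < f x :=
  calc f (lineMap x y t) ≤ (1 - t) • f x + t • f y := by
        rw [lineMap_apply_module]; exact hf.2 hx hy (sub_nonneg.2 ht.2) ht.1.le (sub_add_cancel 1 t)
    _ < (1 - t) • f x + t • f x := by gcongr; exact ht.1
    _ = f x := Convex.combo_self (sub_add_cancel 1 t) _

theorem AffineMap.continuous_comp_lineMap {𝕜 V P W Q : Type*} [Ring 𝕜] [TopologicalSpace 𝕜]
    [IsTopologicalRing 𝕜] [AddCommGroup V] [Module 𝕜 V] [AddTorsor V P] [AddCommGroup W]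
    [Module 𝕜 W] [TopologicalSpace W] [IsTopologicalAddGroup W] [ContinuousSMul 𝕜 W]
    [TopologicalSpace Q] [AddTorsor W Q] [IsTopologicalAddTorsor Q]
    (g : P →ᵃ[𝕜] Q) (x y : P) : Continuous fun t : 𝕜 ↦ g (lineMap x y t) := by
  simpa only [g.apply_lineMap] using lineMap_continuous

theorem strict_constraint_not_local_min_general
    {n : ℕ} (hn : 0 < n)
    (E : Fin n → Type*) [∀ i, NormedAddCommGroup (E i)] [∀ i, NormedSpace ℝ (E i)]
    (D : ∀ i, Set (E i)) (hD : ∀ i, Convex ℝ (D i))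
    (f : ∀ i, E i → ℝ) (hf : ∀ i, ConvexOn ℝ (D i) (f i))
    (g : ∀ i, E i →ᵃ[ℝ] ℝ)
    (ν : ℝ)
    (F : Set (∀ i, E i))
    (hF : F = {x : ∀ i, E i | (∀ i, x i ∈ D i) ∧ ∏ i, (1 - g i (x i)) ≤ 1 - ν})
    (Φ : (∀ i, E i) → ℝ)
    (hΦ : ∀ x, Φ x = Finset.univ.sup' ⟨⟨0, hn⟩, Finset.mem_univ _⟩ (fun i => f i (x i)))
    (x : ∀ i, E i) (hx : x ∈ F)
    (hstrict : ∏ i, (1 - g i (x i)) < 1 - ν)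
    (hsub : ∃ y ∈ F, Φ y < Φ x) :
    ∀ δ > (0 : ℝ), ∃ z ∈ F, ‖z - x‖ < δ ∧ Φ z < Φ x := by
  intro δ hδ
  obtain ⟨y, hy, hΦy⟩ := hsub
  subst hF
  have hD_pi : Convex ℝ (univ.pi D) := convex_pi fun i _ ↦ hD i
  have hΦ_conv : ConvexOn ℝ (univ.pi D) Φ := by
    rw [funext hΦ]
    exact ConvexOn.finset_sup' _ fun i _ ↦
      ((hf i).comp_linearMap (LinearMap.proj i)).subset (fun z hz ↦ hz i trivial) hD_pi
  have hxD : x ∈ univ.pi D := mem_univ_pi.2 hx.1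
  have hyD : y ∈ univ.pi D := mem_univ_pi.2 hy.1
  -- `g i` need not be continuous, but it is affine, so it is continuous along the segment
  have h_strict : ∀ᶠ t in 𝓝 (0 : ℝ), ∏ i, (1 - g i (lineMap x y t i)) < 1 - ν := by
    simp_rw [pi_lineMap_apply]
    refine (continuous_finsetProd _ fun i _ ↦ continuous_const.sub
      ((g i).continuous_comp_lineMap (x i) (y i))).continuousAt.eventually_lt_const ?_
    simpa using hstrict
  have h_close : ∀ᶠ t in 𝓝 (0 : ℝ), dist (lineMap x y t) x < δ :=
    Metric.tendsto_nhds.1 (lineMap_continuous.tendsto' 0 x (lineMap_apply_zero x y)) δ hδ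
  obtain ⟨t, ⟨hcon, hdist⟩, ht⟩ :=
    ((h_strict.and h_close).filter_mono nhdsWithin_le_nhds |>.and (Ioc_mem_nhdsGT one_pos)).exists
  have hzD := hD_pi.lineMap_mem hxD hyD (Ioc_subset_Icc_self ht)
  exact ⟨lineMap x y t, ⟨mem_univ_pi.1 hzD, hcon.le⟩, dist_eq_norm (lineMap x y t) x ▸ hdist,
    hΦ_conv.map_lineMap_lt_left hxD hyD hΦy ht⟩

/-- Case 1 in the proof that every local minimum of the worst-case deceptive
policy synthesis problem is global: a feasible point satisfying the product
constraint strictly, which is not globally optimal, is not a local minimum. -/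
theorem strict_constraint_not_local_min
    {n : ℕ} (hn : 0 < n)
    (E : Fin n → Type*) [∀ i, NormedAddCommGroup (E i)] [∀ i, NormedSpace ℝ (E i)]
    (D : ∀ i, Set (E i)) (hD : ∀ i, Convex ℝ (D i))
    (f : ∀ i, E i → ℝ) (hf : ∀ i, ConvexOn ℝ (D i) (f i))
    (g : ∀ i, E i →ᵃ[ℝ] ℝ) (hg : ∀ i, ∀ z ∈ D i, 0 ≤ g i z ∧ g i z ≤ 1)
    (ν : ℝ) (hν : ν < 1)
    (F : Set (∀ i, E i))
    (hF : F = {x : ∀ i, E i | (∀ i, x i ∈ D i) ∧ ∏ i, (1 - g i (x i)) ≤ 1 - ν})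
    (Φ : (∀ i, E i) → ℝ)
    (hΦ : ∀ x, Φ x = Finset.univ.sup' ⟨⟨0, hn⟩, Finset.mem_univ _⟩ (fun i => f i (x i)))
    (x : ∀ i, E i) (hx : x ∈ F)
    (hstrict : ∏ i, (1 - g i (x i)) < 1 - ν)
    (hsub : ∃ y ∈ F, Φ y < Φ x) :
    ∀ δ > (0 : ℝ), ∃ z ∈ F, ‖z - x‖ < δ ∧ Φ z < Φ x :=
  strict_constraint_not_local_min_general hn E D hD f hf g ν F hF Φ hΦ x hx hstrict hsub
end

section
/- Suppose x, y ∈ F with Π i (1 − g i (x i)) = 1 − ν, and there is an index j with g j (x j) < g j (y j). For θ ∈ (0,1], define x′ by x′ j = (1−θ) · x j + θ · y j and x′ i = x i for all i ≠ j. Then x′ i ∈ D i for all i, Π i (1 − g i (x′ i)) < 1 − ν (so x′ is feasible and satisfies the product constraint strictly), and Φ(x′) ≤ max(Φ(x), f j (y j)). -/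
/-- The perturbation step of Case 2 in the proof that every local minimum of the
worst-case deceptive policy synthesis problem is global. -/
theorem perturbation_step_case_two
    {n : ℕ} (hn : 0 < n)
    (E : Fin n → Type*) [∀ i, NormedAddCommGroup (E i)] [∀ i, NormedSpace ℝ (E i)]
    (D : ∀ i, Set (E i)) (hD : ∀ i, Convex ℝ (D i))
    (f : ∀ i, E i → ℝ) (hf : ∀ i, ConvexOn ℝ (D i) (f i))
    (g : ∀ i, E i →ᵃ[ℝ] ℝ) (hg : ∀ i, ∀ z ∈ D i, 0 ≤ g i z ∧ g i z ≤ 1)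
    (ν : ℝ) (hν : ν < 1)
    (F : Set (∀ i, E i))
    (hF : F = {x : ∀ i, E i | (∀ i, x i ∈ D i) ∧ ∏ i, (1 - g i (x i)) ≤ 1 - ν})
    (Φ : (∀ i, E i) → ℝ)
    (hΦ : ∀ x, Φ x = Finset.univ.sup' ⟨⟨0, hn⟩, Finset.mem_univ _⟩ (fun i => f i (x i)))
    (x y : ∀ i, E i) (hx : x ∈ F) (hy : y ∈ F)
    (heq : ∏ i, (1 - g i (x i)) = 1 - ν)
    (j : Fin n) (hj : g j (x j) < g j (y j))
    (θ : ℝ) (hθ0 : 0 < θ) (hθ1 : θ ≤ 1)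
    (x' : ∀ i, E i)
    (hx' : x' = Function.update x j ((1 - θ) • x j + θ • y j)) :
    (∀ i, x' i ∈ D i) ∧
      (∏ i, (1 - g i (x' i)) < 1 - ν) ∧
      Φ x' ≤ max (Φ x) (f j (y j)) := by

  subst hF hx'
  obtain ⟨hxD, hxP⟩ := hx
  obtain ⟨hyD, _⟩ := hy
  have hν' : (0:ℝ) < 1 - ν := by linarith
  have hfac : ∀ i, 0 ≤ 1 - g i (x i) := fun i => by
    have := (hg i _ (hxD i)).2; linarith
  have hx'D : ∀ i, Function.update x j ((1-θ)•x j + θ•y j) i ∈ D i := by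
    intro i
    rcases eq_or_ne i j with rfl | h
    · simp only [Function.update_self]
      exact (hD i) (hxD i) (hyD i) (by linarith) hθ0.le (by ring)
    · simpa [Function.update_of_ne h] using hxD i
  have hgj : g j ((1-θ)•x j + θ•y j) = (1-θ) * g j (x j) + θ * g j (y j) := by
    rw [← AffineMap.lineMap_apply_module, AffineMap.apply_lineMap,
      AffineMap.lineMap_apply_module]
    simp [smul_eq_mul]
  refine ⟨hx'D, ?_, ?_⟩
  · have hxP' : (1 - g j (x j)) * ∏ i ∈ Finset.univ.erase j, (1 - g i (x i)) = 1 - ν := by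
      exact (Finset.mul_prod_erase Finset.univ (fun i => 1 - g i (x i))
        (Finset.mem_univ j)).trans heq
    have hPnn : 0 ≤ ∏ i ∈ Finset.univ.erase j, (1 - g i (x i)) :=
      Finset.prod_nonneg fun i _ => hfac i
    have hPne : (∏ i ∈ Finset.univ.erase j, (1 - g i (x i))) ≠ 0 := by
      intro h; rw [h, mul_zero] at hxP'; linarith
    have hPpos := lt_of_le_of_ne hPnn (Ne.symm hPne)
    have hprod : ∏ i, (1 - g i (Function.update x j ((1-θ)•x j + θ•y j) i)) =
        (1 - g j ((1-θ)•x j + θ•y j)) * ∏ i ∈ Finset.univ.erase j, (1 - g i (x i)) := by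
      rw [← Finset.mul_prod_erase Finset.univ
        (fun i => 1 - g i (Function.update x j ((1-θ)•x j + θ•y j) i)) (Finset.mem_univ j)]
      simp only [Function.update_self]
      congr 1
      exact Finset.prod_congr rfl fun i hi => by
        rw [Function.update_of_ne (Finset.ne_of_mem_erase hi)]
    rw [hprod, ← hxP']
    apply mul_lt_mul_of_pos_right _ hPpos
    rw [hgj]; nlinarith
  · rw [hΦ, hΦ]
    apply Finset.sup'_le
    intro i _
    rcases eq_or_ne i j with rfl | h
    · simp only [Function.update_self]
      have hconv := (hf i).2 (hxD i) (hyD i) (by linarith : (0:ℝ) ≤ 1-θ) hθ0.le (by ring)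
      simp only [smul_eq_mul] at hconv
      have hA : f i (x i) ≤ Finset.univ.sup' ⟨⟨0, hn⟩, Finset.mem_univ _⟩
          (fun k => f k (x k)) := Finset.le_sup' (fun k => f k (x k)) (Finset.mem_univ i)
      have h1 := le_max_left (Finset.univ.sup' ⟨⟨0, hn⟩, Finset.mem_univ _⟩
          (fun k => f k (x k))) (f i (y i))
      have h2 := le_max_right (Finset.univ.sup' ⟨⟨0, hn⟩, Finset.mem_univ _⟩
          (fun k => f k (x k))) (f i (y i))
      nlinarith
    · rw [Function.update_of_ne h]
      exact le_trans (Finset.le_sup' (fun k => f k (x k)) (Finset.mem_univ i)) (le_max_left _ _)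
end

section
/- For every n ∈ ℕ and all tuples w, p : Fin n → ℝ with w i > 0 and p i > 0 for all i, there exist κ ∈ (0,1), a tuple r : Fin n → ℝ with 0 < r i < 1 for all i, and a tuple V : Fin n → ℝ with V i ≥ 0 for all i, such that, setting θ i = 1 − κ / (κ + (1 − κ) · r i), one has θ i = e^{−p i} and w i = θ i · V i for every i ∈ Fin n. -/
/-!
Solving `1 - κ / (κ + (1 - κ) r) = θ` for `r` gives `r = κ θ / ((1 - κ)(1 - θ))`, which lies in
`(0, 1)` exactly when `κ < 1 - θ`. With `θ i = exp (-p i) ∈ (0, 1)`, a common prior `κ` below every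
`1 - θ i` realizes all profits at once, and `V i = w i / θ i` realizes the weights.
-/

open Filter Topology

noncomputable def likelihoodRatioOfPosterior (κ θ : ℝ) : ℝ :=
  κ * θ / ((1 - κ) * (1 - θ))

section

variable {κ θ : ℝ}

theorem posterior_likelihoodRatioOfPosterior (hκ0 : 0 < κ) (hκ1 : κ < 1) (hθ1 : θ < 1) :
    1 - κ / (κ + (1 - κ) * likelihoodRatioOfPosterior κ θ) = θ := by
  have hκ : 1 - κ ≠ 0 := by linarith
  have hθ : 1 - θ ≠ 0 := by linarith
  have hdenom : κ + (1 - κ) * likelihoodRatioOfPosterior κ θ = κ / (1 - θ) := by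
    unfold likelihoodRatioOfPosterior
    field_simp
    ring
  rw [hdenom, div_div_cancel₀ hκ0.ne']
  ring

theorem likelihoodRatioOfPosterior_pos (hκ0 : 0 < κ) (hκ1 : κ < 1) (hθ0 : 0 < θ) (hθ1 : θ < 1) :
    0 < likelihoodRatioOfPosterior κ θ :=
  div_pos (mul_pos hκ0 hθ0) (mul_pos (by linarith) (by linarith))

theorem likelihoodRatioOfPosterior_lt_one (hκ0 : 0 ≤ κ) (hθ0 : 0 ≤ θ) (hκθ : κ < 1 - θ) :
    likelihoodRatioOfPosterior κ θ < 1 := by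
  rw [likelihoodRatioOfPosterior, div_lt_one (mul_pos (by linarith) (by linarith))]
  nlinarith

end

theorem exists_pos_lt_one_forall_lt {ι : Type*} [Finite ι] {f : ι → ℝ} (hf : ∀ i, 0 < f i) :
    ∃ ε, 0 < ε ∧ ε < 1 ∧ ∀ i, ε < f i := by
  have hsmall : ∀ᶠ ε in 𝓝[>] (0 : ℝ), ε < 1 ∧ ∀ i, ε < f i :=
    (eventually_lt_nhds one_pos).filter_mono nhdsWithin_le_nhds |>.and <|
      eventually_all.2 fun i => (eventually_lt_nhds (hf i)).filter_mono nhdsWithin_le_nhds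
  obtain ⟨ε, hε0, hε1, hεf⟩ := (eventually_mem_nhdsWithin.and hsmall).exists
  exact ⟨ε, hε0, hε1, hεf⟩

/-- Proposition 2 (quantitative content): any real-valued knapsack instance with
positive weights and profits can be realized by the supervisor's elimination
procedure. -/
theorem knapsack_covering
    (n : ℕ) (w p : Fin n → ℝ) (hw : ∀ i, 0 < w i) (hp : ∀ i, 0 < p i) :
    ∃ κ : ℝ, 0 < κ ∧ κ < 1 ∧
      ∃ r : Fin n → ℝ, (∀ i, 0 < r i ∧ r i < 1) ∧
        ∃ V : Fin n → ℝ, (∀ i, 0 ≤ V i) ∧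
          ∀ i, 1 - κ / (κ + (1 - κ) * r i) = Real.exp (-(p i)) ∧
            w i = (1 - κ / (κ + (1 - κ) * r i)) * V i := by
  set θ : Fin n → ℝ := fun i => Real.exp (-(p i))
  have hθ0 (i : Fin n) : 0 < θ i := Real.exp_pos _
  have hθ1 (i : Fin n) : θ i < 1 := Real.exp_lt_one_iff.2 (neg_lt_zero.2 (hp i))
  obtain ⟨κ, hκ0, hκ1, hκθ⟩ := exists_pos_lt_one_forall_lt fun i => sub_pos.2 (hθ1 i)
  have hposterior (i : Fin n) := posterior_likelihoodRatioOfPosterior hκ0 hκ1 (hθ1 i)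
  refine ⟨κ, hκ0, hκ1, fun i => likelihoodRatioOfPosterior κ (θ i),
    fun i => ⟨likelihoodRatioOfPosterior_pos hκ0 hκ1 (hθ0 i) (hθ1 i),
      likelihoodRatioOfPosterior_lt_one hκ0.le (hθ0 i).le (hκθ i)⟩,
    fun i => w i / θ i, fun i => (div_pos (hw i) (hθ0 i)).le, fun i => ⟨hposterior i, ?_⟩⟩
  rw [hposterior i, mul_div_cancel₀ _ (hθ0 i).ne']
end

section
/- Let n ∈ ℕ, let θ : Fin n → ℝ satisfy 0 < θ i < 1 for all i and be monotone (θ i ≤ θ j whenever i ≤ j), and let C ≥ 0. Define T* = {i ∈ Fin n | Σ_{j ≤ i} θ j ≤ C} (the maximal feasible prefix). Then Σ_{i ∈ T*} θ i ≤ C, and for every finset S of Fin n with Σ_{i ∈ S} θ i ≤ C, it holds that Σ_{i ∈ S} (−log(θ i)) ≤ Σ_{i ∈ T*} (−log(θ i)). -/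
/-- When all base utilities are equal and beliefs are sorted in increasing
order, the supervisor's elimination knapsack is solved by the maximal feasible
prefix: adding agents in increasing order of belief `θ i` until the budget
constraint would be violated. -/
theorem greedy_prefix_optimal_for_elimination
    (n : ℕ) (θ : Fin n → ℝ)
    (hθ : ∀ i, 0 < θ i ∧ θ i < 1)
    (hmono : Monotone θ)
    (C : ℝ) (hC : 0 ≤ C)
    (Tstar : Finset (Fin n))
    (hTstar : Tstar = Finset.univ.filter fun i => ∑ j ∈ Finset.Iic i, θ j ≤ C) :
    ∑ i ∈ Tstar, θ i ≤ C ∧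
      ∀ S : Finset (Fin n), ∑ i ∈ S, θ i ≤ C →
        ∑ i ∈ S, (-Real.log (θ i)) ≤ ∑ i ∈ Tstar, (-Real.log (θ i)) := by
  have hpos : ∀ i, 0 < θ i := fun i => (hθ i).1
  constructor
  · rcases Tstar.eq_empty_or_nonempty with h | h
    · simp [h, hC]
    · set i := Tstar.max' h with hi
      have himem : i ∈ Tstar := Tstar.max'_mem h
      have hiC : ∑ j ∈ Finset.Iic i, θ j ≤ C := by
        rw [hTstar] at himem
        exact (Finset.mem_filter.1 himem).2
      refine le_trans (Finset.sum_le_sum_of_subset_of_nonneg ?_ ?_) hiC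
      · intro x hx
        exact Finset.mem_Iic.2 (Tstar.le_max' x hx)
      · intro x _ _; exact (hpos x).le
  · intro S hS
    set m := S.card with hm
    have hmn : m ≤ n := by
      simpa using Finset.card_le_card (Finset.subset_univ S)
    set e := S.orderEmbOfFin rfl with he
    have key : ∀ k : Fin m, (k : ℕ) ≤ ((e k : Fin n) : ℕ) := by
      intro k
      have hsub : (Finset.Iic k).image (fun j => (e j : Fin n)) ⊆ Finset.Iic (e k) := by
        intro x hx
        rcases Finset.mem_image.1 hx with ⟨j, hj, rfl⟩
        exact Finset.mem_Iic.2 (e.monotone (Finset.mem_Iic.1 hj))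
      have hcard := Finset.card_le_card hsub
      rw [Finset.card_image_of_injective _ e.injective] at hcard
      simpa [Fin.card_Iic] using hcard
    have hSmap : Finset.univ.map e.toEmbedding = S := by
      ext x
      simp only [Finset.mem_map, Finset.mem_univ, true_and]
      constructor
      · rintro ⟨j, rfl⟩; exact S.orderEmbOfFin_mem rfl j
      · intro hx
        have : x ∈ Set.range e := by rw [Finset.range_orderEmbOfFin]; exact hx
        rcases this with ⟨j, rfl⟩; exact ⟨j, rfl⟩
    have hsum : ∀ f : Fin n → ℝ, ∑ i ∈ S, f i = ∑ k : Fin m, f (e k) := by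
      intro f
      conv_lhs => rw [← hSmap]
      rw [Finset.sum_map]
      rfl
    set P : Finset (Fin n) := Finset.univ.map (Fin.castLEEmb hmn) with hP
    have hle : ∀ k : Fin m, Fin.castLE hmn k ≤ e k := by
      intro k
      rw [Fin.le_def]
      simpa using key k
    have hPT : P ⊆ Tstar := by
      intro x hx
      rcases Finset.mem_map.1 hx with ⟨k, _, rfl⟩
      rw [hTstar, Finset.mem_filter]
      refine ⟨Finset.mem_univ _, ?_⟩
      have hIic : Finset.Iic ((Fin.castLEEmb hmn) k) =
          (Finset.Iic k).map (Fin.castLEEmb hmn) := by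
        ext x
        simp only [Finset.mem_Iic, Finset.mem_map]
        constructor
        · intro hx'
          have hxk : (x : ℕ) ≤ (k : ℕ) := by
            simpa [Fin.coe_castLEEmb, Fin.le_def] using hx'
          refine ⟨⟨x.val, lt_of_le_of_lt hxk k.2⟩, ?_, ?_⟩
          · exact hxk
          · exact Fin.ext rfl
        · rintro ⟨j, hj, rfl⟩
          exact hj
      calc ∑ j ∈ Finset.Iic ((Fin.castLEEmb hmn) k), θ j
          = ∑ j ∈ Finset.Iic k, θ (Fin.castLE hmn j) := by
            rw [hIic, Finset.sum_map]; rfl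
        _ ≤ ∑ j ∈ Finset.Iic k, θ (e j) :=
            Finset.sum_le_sum fun j _ => hmono (hle j)
        _ ≤ ∑ k : Fin m, θ (e k) := by
            refine Finset.sum_le_sum_of_subset_of_nonneg (Finset.subset_univ _) ?_
            intro x _ _; exact (hpos _).le
        _ = ∑ i ∈ S, θ i := (hsum θ).symm
        _ ≤ C := hS
    have hlog_nonneg : ∀ i : Fin n, 0 ≤ -Real.log (θ i) := by
      intro i
      have := Real.log_nonpos (hpos i).le (hθ i).2.le
      linarith
    calc ∑ i ∈ S, (-Real.log (θ i))
        = ∑ k : Fin m, (-Real.log (θ (e k))) := hsum _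
      _ ≤ ∑ k : Fin m, (-Real.log (θ (Fin.castLE hmn k))) := by
          refine Finset.sum_le_sum fun k _ => ?_
          have h1 : Real.log (θ (Fin.castLE hmn k)) ≤ Real.log (θ (e k)) :=
            Real.log_le_log (hpos _) (hmono (hle k))
          linarith
      _ = ∑ i ∈ P, (-Real.log (θ i)) := by
          rw [hP, Finset.sum_map]; rfl
      _ ≤ ∑ i ∈ Tstar, (-Real.log (θ i)) := by
          refine Finset.sum_le_sum_of_subset_of_nonneg hPT ?_
          intro x _ _; exact hlog_nonneg x
end

section
/- Let S and A be finite types, let P : S → A → S → ℝ satisfy P s a q ≥ 0 for all s, a, q, and let π : S → S → ℝ satisfy π s q ≥ 0 for all s, q, with π s q > 0 whenever there exists a with P s a q > 0. For x : S × A → ℝ, define x_{s,q} = Σ_{a} x(s,a) · P s a q and KL(x) = Σ_{s ∈ S} Σ_{q ∈ S} x_{s,q} · log( x_{s,q} / (π s q · Σ_{a} x(s,a)) ), with the real logarithm (so every term with x_{s,q} = 0 contributes 0). Then KL is convex on the nonnegative orthant {x : S × A → ℝ | ∀ s a, 0 ≤ x (s,a)}. -/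
/-!
Each summand is the relative-entropy function `(u, v) ↦ u log (u / v)` evaluated at
`(x_{s,q}, π s q · ∑ₐ x(s,a))`, a pair depending linearly on `x`. That function is positively
homogeneous and, by the log-sum inequality, subadditive, hence jointly convex on the cone of
pairs with `u ≥ 0`, `v ≥ 0` and `v = 0 → u = 0`; the hypothesis on `π` keeps the linear image of
the orthant inside this cone.
-/

open Finset

noncomputable def relEntr (p : ℝ × ℝ) : ℝ := p.1 * Real.log (p.1 / p.2)

/-- Because `Real.log 0 = 0`, `relEntr` vanishes at `(u, 0)`, so it is not convex on the whole
closed quadrant: pairs with `v = 0 < u` must be excluded. -/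
def relEntrDomain : Set (ℝ × ℝ) := {p | 0 ≤ p.1 ∧ 0 ≤ p.2 ∧ (p.2 = 0 → p.1 = 0)}

section

variable {p q : ℝ × ℝ}

lemma smul_mem_relEntrDomain {c : ℝ} (hc : 0 ≤ c) (hp : p ∈ relEntrDomain) :
    c • p ∈ relEntrDomain := by
  obtain ⟨hu, hv, hvu⟩ := hp
  refine ⟨mul_nonneg hc hu, mul_nonneg hc hv, fun h => ?_⟩
  rcases mul_eq_zero.1 h with h | h
  · simp [h]
  · simp [hvu h]

lemma add_mem_relEntrDomain (hp : p ∈ relEntrDomain) (hq : q ∈ relEntrDomain) :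
    p + q ∈ relEntrDomain := by
  obtain ⟨hu₁, hv₁, hvu₁⟩ := hp
  obtain ⟨hu₂, hv₂, hvu₂⟩ := hq
  refine ⟨add_nonneg hu₁ hu₂, add_nonneg hv₁ hv₂, fun h => ?_⟩
  obtain ⟨h₁, h₂⟩ := (add_eq_zero_iff_of_nonneg hv₁ hv₂).1 h
  simp [hvu₁ h₁, hvu₂ h₂]

end

lemma convex_relEntrDomain : Convex ℝ relEntrDomain := fun _ hp _ hq _ _ ha hb _ =>
  add_mem_relEntrDomain (smul_mem_relEntrDomain ha hp) (smul_mem_relEntrDomain hb hq)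

lemma relEntr_smul (c : ℝ) (p : ℝ × ℝ) : relEntr (c • p) = c * relEntr p := by
  rcases eq_or_ne c 0 with rfl | hc
  · simp [relEntr]
  · simp only [relEntr, Prod.smul_fst, Prod.smul_snd, smul_eq_mul, mul_div_mul_left _ _ hc]
    ring

lemma relEntr_eq_mul_mul_log {p : ℝ × ℝ} (hp : p ∈ relEntrDomain) :
    relEntr p = p.2 * (p.1 / p.2 * Real.log (p.1 / p.2)) := by
  rcases eq_or_ne p.2 0 with h | h
  · simp [relEntr, h, hp.2.2 h]
  · rw [relEntr, ← mul_assoc, mul_div_cancel₀ _ h]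

/-- The log-sum inequality: Jensen for `t ↦ t log t` at the points `p.1 / p.2`, `q.1 / q.2`
with weights proportional to `p.2`, `q.2`. -/
lemma relEntr_add_le {p q : ℝ × ℝ} (hp : p ∈ relEntrDomain) (hq : q ∈ relEntrDomain) :
    relEntr (p + q) ≤ relEntr p + relEntr q := by
  rcases hp.2.1.eq_or_lt with hp₀ | hp₂
  · have : p = 0 := Prod.ext (hp.2.2 hp₀.symm) hp₀.symm
    simp [this, relEntr]
  rcases hq.2.1.eq_or_lt with hq₀ | hq₂
  · have : q = 0 := Prod.ext (hq.2.2 hq₀.symm) hq₀.symm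
    simp [this, relEntr]
  have hV : 0 < p.2 + q.2 := add_pos hp₂ hq₂
  have jensen := Real.convexOn_mul_log.2 (Set.mem_Ici.2 (div_nonneg hp.1 hp₂.le))
    (Set.mem_Ici.2 (div_nonneg hq.1 hq₂.le)) (div_nonneg hp₂.le hV.le) (div_nonneg hq₂.le hV.le)
    (by field_simp)
  have hmean : (p.2 / (p.2 + q.2)) • (p.1 / p.2) + (q.2 / (p.2 + q.2)) • (q.1 / q.2) =
      (p + q).1 / (p + q).2 := by
    simp only [smul_eq_mul, Prod.fst_add, Prod.snd_add]
    field_simp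
  rw [hmean] at jensen
  calc relEntr (p + q)
        = (p.2 + q.2) * ((p + q).1 / (p + q).2 * Real.log ((p + q).1 / (p + q).2)) :=
        relEntr_eq_mul_mul_log (add_mem_relEntrDomain hp hq)
    _ ≤ (p.2 + q.2) * ((p.2 / (p.2 + q.2)) • (p.1 / p.2 * Real.log (p.1 / p.2)) +
          (q.2 / (p.2 + q.2)) • (q.1 / q.2 * Real.log (q.1 / q.2))) :=
        mul_le_mul_of_nonneg_left jensen hV.le
    _ = relEntr p + relEntr q := by
        rw [relEntr_eq_mul_mul_log hp, relEntr_eq_mul_mul_log hq, smul_eq_mul, smul_eq_mul]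
        field_simp

lemma convexOn_relEntr : ConvexOn ℝ relEntrDomain relEntr :=
  ⟨convex_relEntrDomain, fun p hp q hq a b ha hb _ => by
    simpa only [relEntr_smul, smul_eq_mul] using
      relEntr_add_le (smul_mem_relEntrDomain ha hp) (smul_mem_relEntrDomain hb hq)⟩

lemma convexOn_finset_sum {𝕜 E β ι : Type*} [Semiring 𝕜] [PartialOrder 𝕜] [AddCommMonoid E]
    [AddCommMonoid β] [PartialOrder β] [IsOrderedAddMonoid β] [SMul 𝕜 E] [Module 𝕜 β]
    {s : Set E} (hs : Convex 𝕜 s) (t : Finset ι) {f : ι → E → β}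
    (hf : ∀ i ∈ t, ConvexOn 𝕜 s (f i)) : ConvexOn 𝕜 s fun x => ∑ i ∈ t, f i x := by
  classical
  induction t using Finset.induction_on with
  | empty => simpa using convexOn_const 0 hs
  | insert i t hi ih =>
    simp only [Finset.sum_insert hi]
    exact (hf i (mem_insert_self i t)).add (ih fun j hj => hf j (mem_insert_of_mem hj))

lemma convexOn_relEntr_comp {E : Type*} [AddCommMonoid E] [Module ℝ E] {ℓ m : E → ℝ}
    (hℓ : IsLinearMap ℝ ℓ) (hm : IsLinearMap ℝ m) :
    ConvexOn ℝ {x | (ℓ x, m x) ∈ relEntrDomain} fun x => relEntr (ℓ x, m x) :=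
  convexOn_relEntr.comp_linearMap ((hℓ.mk' ℓ).prod (hm.mk' m))

lemma mem_relEntrDomain_of_nonneg {ι : Type*} [Fintype ι] {x p : ι → ℝ} {c : ℝ}
    (hx : ∀ i, 0 ≤ x i) (hp : ∀ i, 0 ≤ p i) (hc : 0 ≤ c) (hpc : (∃ i, 0 < p i) → 0 < c) :
    (∑ i, x i * p i, c * ∑ i, x i) ∈ relEntrDomain := by
  refine ⟨sum_nonneg fun i _ => mul_nonneg (hx i) (hp i),
    mul_nonneg hc (sum_nonneg fun i _ => hx i), fun h => sum_eq_zero fun i _ => ?_⟩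
  rcases mul_eq_zero.1 h with hc₀ | hx₀
  · have : ¬ 0 < p i := fun hpi => (hpc ⟨i, hpi⟩).ne' hc₀
    simp [(not_lt.1 this).antisymm (hp i)]
  · simp [(sum_eq_zero_iff_of_nonneg fun j _ => hx j).1 hx₀ i (mem_univ i)]

/-- The KL divergence between the path distributions of the deceptive and
reference policies, expressed as a function of the state-action occupancy
measure (equation (6) of the paper), is convex on the nonnegative orthant. -/
theorem kl_occupancy_convexOn
    (S A : Type*) [Fintype S] [Fintype A]
    (P : S → A → S → ℝ) (hP : ∀ s a q, 0 ≤ P s a q)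
    (π : S → S → ℝ) (hπ0 : ∀ s q, 0 ≤ π s q)
    (hπ : ∀ s q, (∃ a, 0 < P s a q) → 0 < π s q) :
    ConvexOn ℝ {x : S × A → ℝ | ∀ s a, 0 ≤ x (s, a)}
      (fun x : S × A → ℝ =>
        ∑ s : S, ∑ q : S,
          (∑ a : A, x (s, a) * P s a q) *
            Real.log ((∑ a : A, x (s, a) * P s a q) /
              (π s q * ∑ a : A, x (s, a)))) := by
  have horthant : Convex ℝ {x : S × A → ℝ | ∀ s a, 0 ≤ x (s, a)} := by
    simpa only [Set.Ici, Pi.le_def, Prod.forall, Pi.zero_apply] using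
      convex_Ici (𝕜 := ℝ) (0 : S × A → ℝ)
  refine convexOn_finset_sum horthant _ fun s _ => convexOn_finset_sum horthant _ fun q _ => ?_
  have hℓ : IsLinearMap ℝ fun x : S × A → ℝ => ∑ a, x (s, a) * P s a q :=
    ⟨fun x y => by simp [add_mul, sum_add_distrib], fun c x => by simp [mul_sum, mul_assoc]⟩
  have hm : IsLinearMap ℝ fun x : S × A → ℝ => π s q * ∑ a, x (s, a) :=
    ⟨fun x y => by simp [sum_add_distrib, mul_add], fun c x => by simp [mul_sum, mul_left_comm]⟩
  exact (convexOn_relEntr_comp hℓ hm).subset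
    (fun x (hx : ∀ s a, 0 ≤ x (s, a)) =>
      mem_relEntrDomain_of_nonneg (hx s) (hP s · q) (hπ0 s q) (hπ s q)) horthant
end
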